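/- Let d ≥ 3 and let (h_0,...,h_d) be nonnegative integers with h_0 = 1, h_1 ≥ 1, and h_i ≥ h_{d-i} for all 0 ≤ i ≤ ⌊d/2⌋. Define f_k = Σ_{i=0}^d h_i C(d-i, d-1-k) for 0 ≤ k ≤ d-1. Then f_0 < f_1 < ... < f_{⌊(d-1)/2⌋} and f_{⌊3(d-1)/4⌋} ≥ f_{⌊3(d-1)/4⌋+1} ≥ ... ≥ f_{d-1}. -/

import Mathlib

/-!
Write `Δ(n, j) = C(n, j+1) - C(n, j)`, so that `(n + 1) Δ(n, j) = (n - 2j - 1) C(n+1, j+1)` and the sign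
of `Δ(n, j)` is that of `n - 2j - 1`. Both comparisons of consecutive `f_k` become the sign of
`∑ h_i Δ(d-i, j)` with `j = d - 2 - k`. In the increasing range every `Δ(d-i, j)` is `≤ 0` and the term
`i = 1` is strictly negative. In the decreasing range pair `i` with `d - i`:
`h_i Δ(d-i) + h_{d-i} Δ(i) = (h_i - h_{d-i}) Δ(d-i) + h_{d-i} (Δ(d-i) + Δ(i))`, where `Δ(d-i) ≥ 0` and
`Δ(n) + Δ(i) ≥ 0` whenever `i ≤ n` and `4j + 2 ≤ n + i`.
-/

open Finset

def chooseDiff (n j : ℕ) : ℤ := n.choose (j + 1) - n.choose j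

theorem add_one_mul_chooseDiff (n j : ℕ) :
    ((n : ℤ) + 1) * chooseDiff n j = ((n : ℤ) - 2 * j - 1) * (n + 1).choose (j + 1) := by
  have hlow : ((n : ℤ) + 1) * n.choose j = (n + 1).choose (j + 1) * (j + 1) := by
    exact_mod_cast Nat.add_one_mul_choose_eq n j
  rcases le_or_gt j n with hjn | hnj
  · have hhigh : (n.choose (j + 1) : ℤ) * (n + 1) = (n + 1).choose (j + 1) * (n - j) := by
      have := Nat.choose_mul_succ_eq n (j + 1)
      rw [show n + 1 - (j + 1) = n - j by omega] at this
      exact_mod_cast this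
    unfold chooseDiff
    linear_combination hhigh - hlow
  · rw [chooseDiff, Nat.choose_eq_zero_of_lt hnj, Nat.choose_eq_zero_of_lt (by omega),
      Nat.choose_eq_zero_of_lt (by omega)]
    simp

theorem chooseDiff_nonneg {n j : ℕ} (h : 2 * j + 1 ≤ n) : 0 ≤ chooseDiff n j := by
  have hid := add_one_mul_chooseDiff n j
  have hsign : (0 : ℤ) ≤ ((n : ℤ) - 2 * j - 1) * (n + 1).choose (j + 1) :=
    mul_nonneg (by omega) (by positivity)
  nlinarith

theorem chooseDiff_nonpos {n j : ℕ} (h : n ≤ 2 * j + 1) : chooseDiff n j ≤ 0 := by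
  have hid := add_one_mul_chooseDiff n j
  have hsign : ((n : ℤ) - 2 * j - 1) * (n + 1).choose (j + 1) ≤ 0 :=
    mul_nonpos_of_nonpos_of_nonneg (by omega) (by positivity)
  nlinarith

theorem chooseDiff_neg {n j : ℕ} (hj : j ≤ n) (h : n ≤ 2 * j) : chooseDiff n j < 0 := by
  have hid := add_one_mul_chooseDiff n j
  have hpos : (0 : ℤ) < (n + 1).choose (j + 1) := by exact_mod_cast Nat.choose_pos (by omega)
  have hsign : ((n : ℤ) - 2 * j - 1) * (n + 1).choose (j + 1) < 0 :=
    mul_neg_of_neg_of_pos (by omega) hpos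
  nlinarith

theorem add_one_mul_choose_succ_le {i n : ℕ} (j : ℕ) (hin : i ≤ n) :
    (n + 1) * (i + 1).choose (j + 1) ≤ (i + 1) * (n + 1).choose (j + 1) := by
  refine Nat.le_of_mul_le_mul_right ?_ j.succ_pos
  calc (n + 1) * (i + 1).choose (j + 1) * (j + 1) = (n + 1) * ((i + 1) * i.choose j) := by
        rw [Nat.add_one_mul_choose_eq]; ring
    _ ≤ (n + 1) * ((i + 1) * n.choose j) := by gcongr
    _ = (i + 1) * (n + 1).choose (j + 1) * (j + 1) := by
        rw [mul_left_comm, Nat.add_one_mul_choose_eq]; ring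

theorem chooseDiff_add_chooseDiff_nonneg {i n j : ℕ} (hin : i ≤ n) (h : 4 * j + 2 ≤ n + i) :
    0 ≤ chooseDiff n j + chooseDiff i j := by
  rcases le_or_gt (2 * j + 1) i with hi | hi
  · exact add_nonneg (chooseDiff_nonneg (by omega)) (chooseDiff_nonneg hi)
  have hn := add_one_mul_chooseDiff n j
  have hi' := add_one_mul_chooseDiff i j
  have hmono : ((n : ℤ) + 1) * (i + 1).choose (j + 1) ≤ ((i : ℤ) + 1) * (n + 1).choose (j + 1) := by
    exact_mod_cast add_one_mul_choose_succ_le j hin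
  -- After multiplying by `(i + 1)(n + 1)`, the negative term `(i - 2j - 1)(n + 1) C(i+1, j+1)` is
  -- dominated by `(n - 2j - 1)(i + 1) C(n+1, j+1)` thanks to `hgap` and `hmono`.
  have hgap : (2 * j + 1 - i : ℤ) ≤ n - 2 * j - 1 := by omega
  have hpos : (0 : ℤ) < ((i : ℤ) + 1) * ((n : ℤ) + 1) := by positivity
  have hC : (0 : ℤ) ≤ ((n + 1).choose (j + 1) : ℤ) := by positivity
  have key : 0 ≤ ((i : ℤ) + 1) * ((n : ℤ) + 1) * (chooseDiff n j + chooseDiff i j) := by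
    nlinarith [mul_le_mul_of_nonneg_left hmono (by omega : (0 : ℤ) ≤ 2 * j + 1 - i),
      mul_le_mul_of_nonneg_left hgap (mul_nonneg (by positivity : (0 : ℤ) ≤ (i : ℤ) + 1) hC)]
  exact nonneg_of_mul_nonneg_right key hpos

section Sums

variable (d j : ℕ) (h : ℕ → ℕ)

theorem sum_mul_choose_succ_sub_sum_mul_choose :
    ((∑ i ∈ range (d + 1), h i * (d - i).choose (j + 1) : ℕ) : ℤ) -
        (∑ i ∈ range (d + 1), h i * (d - i).choose j : ℕ) =
      ∑ i ∈ range (d + 1), (h i : ℤ) * chooseDiff (d - i) j := by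
  push_cast
  rw [← sum_sub_distrib]
  simp only [chooseDiff, mul_sub]

theorem sum_mul_chooseDiff_neg (h1 : 1 ≤ h 1) (hjd : j + 2 ≤ d) (hdj : d ≤ 2 * j + 1) :
    ∑ i ∈ range (d + 1), (h i : ℤ) * chooseDiff (d - i) j < 0 := by
  refine sum_neg' (fun i _ => ?_) ⟨1, mem_range.mpr (by omega), ?_⟩
  · exact mul_nonpos_of_nonneg_of_nonpos (by positivity) (chooseDiff_nonpos (by omega))
  · exact mul_neg_of_pos_of_neg (by exact_mod_cast h1) (chooseDiff_neg (by omega) (by omega))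

theorem sum_mul_chooseDiff_nonneg (hsym : ∀ i, i ≤ d / 2 → h (d - i) ≤ h i) (hdj : 4 * j + 2 ≤ d) :
    0 ≤ ∑ i ∈ range (d + 1), (h i : ℤ) * chooseDiff (d - i) j := by
  set g : ℕ → ℤ := fun i => h i * chooseDiff (d - i) j
  have hpair : ∀ i, i ≤ d / 2 → 0 ≤ g i + g (d - i) := by
    intro i hi
    have hhi : (h (d - i) : ℤ) ≤ h i := by exact_mod_cast hsym i hi
    have hstep := chooseDiff_nonneg (n := d - i) (j := j) (by omega)
    have hsum := chooseDiff_add_chooseDiff_nonneg (i := i) (n := d - i) (j := j) (by omega) (by omega)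
    simp only [g, Nat.sub_sub_self (show i ≤ d by omega)]
    nlinarith [mul_nonneg (sub_nonneg.mpr hhi) hstep, mul_nonneg (Nat.cast_nonneg (h (d - i))) hsum]
  have hreflect : ∑ i ∈ range (d + 1), g (d - i) = ∑ i ∈ range (d + 1), g i := by
    simpa using sum_range_reflect g (d + 1)
  have htwice : 0 ≤ ∑ i ∈ range (d + 1), (g i + g (d - i)) := by
    refine sum_nonneg fun i hi => ?_
    rcases le_or_gt i (d / 2) with hle | hgt
    · exact hpair i hle
    · have hmirror := hpair (d - i) (by omega)
      rwa [Nat.sub_sub_self (by simp at hi; omega), add_comm] at hmirror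
  rw [sum_add_distrib, hreflect] at htwice
  linarith

end Sums

theorem stmt19_general (d : ℕ) (h : ℕ → ℕ) (h1 : 1 ≤ h 1)
    (hsym : ∀ i, i ≤ d / 2 → h (d - i) ≤ h i)
    (f : ℕ → ℕ)
    (hf : ∀ k, f k = ∑ i ∈ Finset.range (d + 1), h i * Nat.choose (d - i) (d - 1 - k)) :
    (∀ k, k + 1 ≤ (d - 1) / 2 → f k < f (k + 1)) ∧
    (∀ k, 3 * (d - 1) / 4 ≤ k → k + 1 ≤ d - 1 → f (k + 1) ≤ f k) := by
  have hf' : ∀ k, k + 2 ≤ d → (f k : ℤ) - f (k + 1) =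
      ∑ i ∈ range (d + 1), (h i : ℤ) * chooseDiff (d - i) (d - 2 - k) := by
    intro k hk
    rw [hf, hf, show d - 1 - k = d - 2 - k + 1 by omega, show d - 1 - (k + 1) = d - 2 - k by omega]
    exact sum_mul_choose_succ_sub_sum_mul_choose d (d - 2 - k) h
  constructor
  · intro k hk
    have hneg := sum_mul_chooseDiff_neg d (d - 2 - k) h h1 (by omega) (by omega)
    linarith [hf' k (by omega)]
  · intro k hk hkd
    have hnonneg := sum_mul_chooseDiff_nonneg d (d - 2 - k) h hsym (by omega)
    linarith [hf' k (by omega)]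

theorem stmt19 (d : ℕ) (hd : 3 ≤ d) (h : ℕ → ℕ) (h0 : h 0 = 1) (h1 : 1 ≤ h 1)
    (hsym : ∀ i, i ≤ d / 2 → h (d - i) ≤ h i)
    (f : ℕ → ℕ)
    (hf : ∀ k, f k = ∑ i ∈ Finset.range (d + 1), h i * Nat.choose (d - i) (d - 1 - k)) :
    (∀ k, k + 1 ≤ (d - 1) / 2 → f k < f (k + 1)) ∧
    (∀ k, 3 * (d - 1) / 4 ≤ k → k + 1 ≤ d - 1 → f (k + 1) ≤ f k) :=
  stmt19_general d h h1 hsym f hf
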